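/- The value of the polynomial P_t at T = 1 equals n! times the Lebesgue volume of Δ: P_t(1) = n!·vol(Δ). -/

import Mathlib

/-!
Write `A(j) = ∑_{k ≤ j} W_t(k)`. Since `∑ A(j) T^j = P_t(T) / ((1 - T) (1 - T^M)^n)` and
`1 / ((1 - T) (1 - T^M)^n) = ∑_j binom(⌊j/M⌋ + n, n) T^j`, the partial sum `A(mM)` is a
combination of binomial coefficients `binom(m + O(1), n)` weighted by the coefficients of `P_t`,
so `A(mM) / m^n → P_t(1) / n!`.

On the other hand, as all degrees lie in `(1/M)ℤ`, `A(mM)` counts the points `u ∈ t/N + ℤⁿ` with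
`u/m ∈ Δ`. The half-open cubes of side `1/m` with corners `u/m` are disjoint, lie in the
`1/m`-thickening of `Δ` and cover the points whose closed `1/m`-ball lies in `Δ`. Both bounds tend
to `vol Δ`, the inner one because the boundary of a convex set is Lebesgue-null; hence
`A(mM) / m^n → vol Δ`.
-/

open scoped BigOperators ENNReal

noncomputable section

/-- The cone `C(Δ) = ℝ_{≥0}·Δ` generated by `Δ`. -/
def coneOf {n : ℕ} (Δ : Set (Fin n → ℝ)) : Set (Fin n → ℝ) :=
  {u | ∃ r : ℝ, 0 ≤ r ∧ ∃ d ∈ Δ, u = r • d}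

/-- The lattice points `L_t(Δ) = C(Δ) ∩ (t/N + ℤⁿ)`. -/
def latticePts {n : ℕ} (Δ : Set (Fin n → ℝ)) (N : ℕ) (t : Fin n → ℤ) : Set (Fin n → ℝ) :=
  {u | u ∈ coneOf Δ ∧ ∃ z : Fin n → ℤ, ∀ j, u j = (t j : ℝ) / (N : ℝ) + (z j : ℝ)}

/-- `W_t(k)`, the number of points of `L_t(Δ)` of degree `k/M`; the degree is the
gauge (Minkowski functional) of `Δ`. -/
noncomputable def Wcount {n : ℕ} (Δ : Set (Fin n → ℝ)) (N M : ℕ) (t : Fin n → ℤ) (k : ℕ) : ℕ :=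
  Set.ncard {u | u ∈ latticePts Δ N t ∧ gauge Δ u = (k : ℝ) / (M : ℝ)}

namespace PowerSeries

open Finset

variable {R : Type*} [CommRing R]

theorem coeff_one_sub_X_pow_mul (M j : ℕ) (f : R⟦X⟧) :
    coeff j ((1 - X ^ M) * f) = coeff j f - if M ≤ j then coeff (j - M) f else 0 := by
  rw [sub_mul, one_mul, map_sub, coeff_X_pow_mul']

theorem one_sub_X_pow_mul_mk_choose_div_add_succ {M : ℕ} (hM : 0 < M) (n : ℕ) :
    (1 - X ^ M) * mk (fun j => ((j / M + (n + 1)).choose (n + 1) : R)) =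
      mk fun j => ((j / M + n).choose n : R) := by
  ext j
  rw [coeff_one_sub_X_pow_mul]
  simp only [coeff_mk]
  split_ifs with h
  · rw [Nat.div_eq_sub_div hM h,
      show (j - M) / M + 1 + (n + 1) = (j - M) / M + n + 1 + 1 by ring, Nat.choose_succ_succ',
      show (j - M) / M + 1 + n = (j - M) / M + n + 1 by ring]
    simp only [← add_assoc]
    push_cast
    ring
  · rw [Nat.div_eq_of_lt (not_le.1 h)]
    simp

theorem one_sub_X_mul_one_sub_X_pow_pow_mul_mk_choose {M : ℕ} (hM : 0 < M) (n : ℕ) :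
    (1 - X) * ((1 - X ^ M) ^ n * mk fun j => ((j / M + n).choose n : R)) = 1 := by
  induction n with
  | zero =>
    simp only [pow_zero, one_mul, add_zero, Nat.choose_zero_right, Nat.cast_one]
    exact (mul_comm _ _).trans (mk_one_mul_one_sub_eq_one R)
  | succ n ih => rw [pow_succ, mul_assoc, one_sub_X_pow_mul_mk_choose_div_add_succ hM, ih]

theorem one_sub_X_mul_mk_sum_range (W : ℕ → R) :
    (1 - X) * mk (fun j => ∑ k ∈ range (j + 1), W k) = mk W := by
  ext (_ | j)
  · simp
  · simpa [sub_eq_iff_eq_add', sum_range_succ] using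
      coeff_one_sub_X_pow_mul 1 (j + 1) (mk fun j => ∑ k ∈ range (j + 1), W k)

theorem sum_range_eq_sum_coeff_mul_choose {M : ℕ} (hM : 0 < M) (n : ℕ) (W : ℕ → R) {l j : ℕ}
    (hl : ∀ k, l < k → coeff k ((1 - X ^ M) ^ n * mk W) = 0) (hj : l ≤ j) :
    ∑ k ∈ range (j + 1), W k =
      ∑ k ∈ range (l + 1),
        coeff k ((1 - X ^ M) ^ n * mk W) * (((j - k) / M + n).choose n : R) := by
  set G : R⟦X⟧ := mk fun j => ((j / M + n).choose n : R)
  have key : mk (fun j => ∑ k ∈ range (j + 1), W k) = (1 - X ^ M) ^ n * mk W * G := by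
    calc mk (fun j => ∑ k ∈ range (j + 1), W k)
        = (1 - X) * ((1 - X ^ M) ^ n * G) * mk (fun j => ∑ k ∈ range (j + 1), W k) := by
          rw [one_sub_X_mul_one_sub_X_pow_pow_mul_mk_choose hM, one_mul]
      _ = (1 - X ^ M) ^ n * ((1 - X) * mk (fun j => ∑ k ∈ range (j + 1), W k)) * G := by ring
      _ = (1 - X ^ M) ^ n * mk W * G := by rw [one_sub_X_mul_mk_sum_range]
  rw [← coeff_mk j (fun j => ∑ k ∈ range (j + 1), W k), key, coeff_mul,
    Nat.sum_antidiagonal_eq_sum_range_succ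
      (fun a b => coeff a ((1 - X ^ M) ^ n * mk W) * coeff b G)]
  simp only [G, coeff_mk]
  refine (sum_subset (range_subset_range.2 (by omega)) fun k hk hkl => ?_).symm
  simp only [mem_range] at hk hkl
  rw [hl k (by omega), zero_mul]

end PowerSeries

section Asymptotics

open Finset Filter Topology
open scoped Nat

theorem tendsto_natCast_add_div_pow (a : ℝ) (n : ℕ) :
    Tendsto (fun m : ℕ => ((m + a) / m) ^ n) atTop (𝓝 1) := by
  simpa using ((tendsto_natCast_div_add_atTop a).inv₀ one_ne_zero).pow n

theorem add_one_pow_div_factorial_le_choose_add (a n : ℕ) :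
    ((a : ℝ) + 1) ^ n / n ! ≤ (a + n).choose n := by
  simpa [show a + n + 1 - n = a + 1 by omega] using Nat.pow_le_choose (α := ℝ) n (a + n)

theorem choose_add_le_add_pow_div_factorial (a n : ℕ) :
    ((a + n).choose n : ℝ) ≤ ((a : ℝ) + n) ^ n / n ! := by
  exact_mod_cast Nat.choose_le_pow_div (α := ℝ) n (a + n)

theorem sub_pow_div_factorial_le_choose_sub_div_add {M m k l : ℕ} (hM : 0 < M) (hk : k ≤ l)
    (hl : l ≤ m) (n : ℕ) :
    ((m : ℝ) - l) ^ n / n ! ≤ ((m * M - k) / M + n).choose n ∧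
      (((m * M - k) / M + n).choose n : ℝ) ≤ ((m : ℝ) + n) ^ n / n ! := by
  have hlo : m - l ≤ (m * M - k) / M := by
    rw [Nat.le_div_iff_mul_le hM, Nat.sub_mul]
    exact Nat.sub_le_sub_left (hk.trans (Nat.le_mul_of_pos_right l hM)) _
  have hhi : (m * M - k) / M ≤ m := Nat.div_le_of_le_mul (by rw [mul_comm]; omega)
  have hlo' : (m : ℝ) ≤ ((m * M - k) / M : ℕ) + l := by exact_mod_cast (by omega : m ≤ _)
  constructor
  · refine le_trans (div_le_div_of_nonneg_right (pow_le_pow_left₀ ?_ ?_ n) (by positivity))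
      (add_one_pow_div_factorial_le_choose_add _ n)
    · exact sub_nonneg.2 (by exact_mod_cast hl)
    · linarith
  · refine (choose_add_le_add_pow_div_factorial _ n).trans ?_
    gcongr

theorem tendsto_sum_range_mul_div_pow {M : ℕ} (hM : 0 < M) (n : ℕ) (W c : ℕ → ℕ) (l : ℕ)
    (hc : ∀ k, PowerSeries.coeff k
      ((1 - PowerSeries.X ^ M) ^ n * PowerSeries.mk fun j => (W j : ℤ)) = (c k : ℤ))
    (hcl : ∀ k, l < k → c k = 0) :
    Tendsto (fun m : ℕ => (∑ k ∈ range (m * M + 1), W k : ℝ) / m ^ n) atTop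
      (𝓝 ((∑ k ∈ range (l + 1), c k : ℝ) / n !)) := by
  set ρ : ℝ := ∑ k ∈ range (l + 1), (c k : ℝ)
  have hsum : ∀ m, l ≤ m → (∑ k ∈ range (m * M + 1), W k : ℝ) =
      ∑ k ∈ range (l + 1), (c k : ℝ) * ((m * M - k) / M + n).choose n := by
    intro m hm
    have := PowerSeries.sum_range_eq_sum_coeff_mul_choose hM n (fun j => (W j : ℤ))
      (fun k hk => by rw [hc, hcl k hk, Nat.cast_zero]) (hm.trans (Nat.le_mul_of_pos_right m hM))
    simp only [hc] at this
    exact_mod_cast this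
  have hbounds : ∀ m, l ≤ m → ∀ k ∈ range (l + 1),
      ((m : ℝ) - l) ^ n / n ! ≤ ((m * M - k) / M + n).choose n ∧
        (((m * M - k) / M + n).choose n : ℝ) ≤ ((m : ℝ) + n) ^ n / n ! := fun m hm k hk =>
    sub_pow_div_factorial_le_choose_sub_div_add hM (Nat.lt_succ_iff.1 (mem_range.1 hk)) hm n
  have hlow : ∀ m, l ≤ m → ρ / n ! * (((m : ℝ) - l) / m) ^ n ≤
      (∑ k ∈ range (m * M + 1), W k : ℝ) / m ^ n := by
    intro m hm
    rw [div_pow, hsum m hm, ← mul_div_assoc]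
    gcongr
    rw [show ρ / n ! * _ = ρ * (((m : ℝ) - l) ^ n / n !) by ring, sum_mul]
    gcongr with k hk
    exact (hbounds m hm k hk).1
  have hupp : ∀ m, l ≤ m → (∑ k ∈ range (m * M + 1), W k : ℝ) / m ^ n ≤
      ρ / n ! * (((m : ℝ) + n) / m) ^ n := by
    intro m hm
    rw [div_pow, hsum m hm, ← mul_div_assoc]
    gcongr
    rw [show ρ / n ! * _ = ρ * (((m : ℝ) + n) ^ n / n !) by ring, sum_mul]
    gcongr with k hk
    exact (hbounds m hm k hk).2
  refine tendsto_of_tendsto_of_tendsto_of_le_of_le' ?_ ?_ (eventually_atTop.2 ⟨l, hlow⟩)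
    (eventually_atTop.2 ⟨l, hupp⟩)
  · simpa [← sub_eq_add_neg] using (tendsto_natCast_add_div_pow (-l) n).const_mul (ρ / n !)
  · simpa using (tendsto_natCast_add_div_pow n n).const_mul (ρ / n !)

end Asymptotics

section LatticeCells

open MeasureTheory Metric Set Filter Topology Function

variable {ι : Type*}

def latticeCorner (m : ℝ) (w : ι → ℝ) (z : ι → ℤ) : ι → ℝ := fun j => (w j + z j) / m

def latticeCell (m : ℝ) (w : ι → ℝ) (z : ι → ℤ) : Set (ι → ℝ) :=
  univ.pi fun j => Ico (latticeCorner m w z j) (latticeCorner m w z j + 1 / m)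

variable {m : ℝ} {w : ι → ℝ}

theorem mem_latticeCell_iff (hm : 0 < m) {z : ι → ℤ} {x : ι → ℝ} :
    x ∈ latticeCell m w z ↔ ∀ j, ⌊m * x j - w j⌋ = z j := by
  simp only [latticeCell, latticeCorner, mem_univ_pi, mem_Ico, Int.floor_eq_iff, ← add_div,
    div_le_iff₀ hm, lt_div_iff₀ hm]
  refine forall_congr' fun j => ?_
  constructor <;> rintro ⟨h₁, h₂⟩ <;> constructor <;> linarith

theorem pairwise_disjoint_latticeCell (hm : 0 < m) (w : ι → ℝ) :
    Pairwise (Disjoint on latticeCell m w) := fun z z' hne =>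
  disjoint_left.2 fun x hx hx' => hne <| funext fun j => by
    rw [← (mem_latticeCell_iff hm).1 hx j, (mem_latticeCell_iff hm).1 hx' j]

theorem measurableSet_latticeCell [Fintype ι] (m : ℝ) (w : ι → ℝ) (z : ι → ℤ) :
    MeasurableSet (latticeCell m w z) :=
  MeasurableSet.univ_pi fun _ => measurableSet_Ico

theorem volume_latticeCell [Fintype ι] (m : ℝ) (w : ι → ℝ) (z : ι → ℤ) :
    volume (latticeCell m w z) = ENNReal.ofReal (1 / m) ^ Fintype.card ι := by
  simp [latticeCell, volume_pi_pi, Real.volume_Ico]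

theorem dist_latticeCorner_le [Fintype ι] (hm : 0 < m) {z : ι → ℤ} {x : ι → ℝ}
    (hx : x ∈ latticeCell m w z) : dist x (latticeCorner m w z) ≤ 1 / m := by
  refine (dist_pi_le_iff (by positivity)).2 fun j => ?_
  obtain ⟨h₁, h₂⟩ := hx j (mem_univ j)
  rw [Real.dist_eq, abs_le]
  constructor <;> linarith

theorem volume_biUnion_latticeCell [Fintype ι] (hm : 0 < m) (w : ι → ℝ) (Z : Set (ι → ℤ)) :
    volume (⋃ z ∈ Z, latticeCell m w z) =
      Z.encard * ENNReal.ofReal (1 / m) ^ Fintype.card ι := by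
  rw [measure_biUnion Z.to_countable ((pairwise_disjoint_latticeCell hm w).set_pairwise Z)
    fun z _ => measurableSet_latticeCell m w z]
  simp [volume_latticeCell]

theorem encard_preimage_latticeCorner_mul_le [Fintype ι] (hm : 0 < m) (K : Set (ι → ℝ))
    (w : ι → ℝ) :
    (latticeCorner m w ⁻¹' K).encard * ENNReal.ofReal (1 / m) ^ Fintype.card ι ≤
      volume (cthickening (1 / m) K) := by
  rw [← volume_biUnion_latticeCell hm]
  exact measure_mono <| iUnion₂_subset fun z hz x hx =>
    mem_cthickening_of_dist_le x _ _ K hz (dist_latticeCorner_le hm hx)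

theorem volume_setOf_closedBall_subset_le [Fintype ι] (hm : 0 < m) (K : Set (ι → ℝ))
    (w : ι → ℝ) :
    volume {x | closedBall x (1 / m) ⊆ K} ≤
      (latticeCorner m w ⁻¹' K).encard * ENNReal.ofReal (1 / m) ^ Fintype.card ι := by
  rw [← volume_biUnion_latticeCell hm]
  refine measure_mono fun x hx => ?_
  have hcell : x ∈ latticeCell m w fun j => ⌊m * x j - w j⌋ :=
    (mem_latticeCell_iff hm).2 fun _ => rfl
  exact mem_biUnion (hx (mem_closedBall'.2 (dist_latticeCorner_le hm hcell))) hcell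

theorem Bornology.IsBounded.finite_preimage_latticeCorner [Fintype ι] {K : Set (ι → ℝ)}
    (hK : Bornology.IsBounded K) (hm : 0 < m) (w : ι → ℝ) :
    (latticeCorner m w ⁻¹' K).Finite := by
  rw [← encard_ne_top_iff]
  intro htop
  have := (encard_preimage_latticeCorner_mul_le hm K w).trans_lt hK.cthickening.measure_lt_top
  simp [htop, ENNReal.top_mul, hm] at this

theorem Convex.tendsto_volume_setOf_closedBall_subset [Fintype ι] {K : Set (ι → ℝ)}
    (hK : Convex ℝ K) :
    Tendsto (fun m : ℕ => volume {x | closedBall x (1 / m) ⊆ K}) atTop (𝓝 (volume K)) := by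
  set f : ℕ → Set (ι → ℝ) := fun k => {x | closedBall x (1 / ((k + 1 : ℕ) : ℝ)) ⊆ K}
  have hmono : Monotone f := fun a b hab x hx =>
    (closedBall_subset_closedBall (by gcongr)).trans hx
  have hunion : ⋃ k, f k = interior K := by
    ext x
    simp only [mem_iUnion, mem_interior_iff_mem_nhds, Metric.mem_nhds_iff]
    constructor
    · rintro ⟨k, hk⟩
      exact ⟨_, by positivity, ball_subset_closedBall.trans hk⟩
    · rintro ⟨ε, hε, hball⟩
      obtain ⟨k, hk⟩ := exists_nat_one_div_lt hε
      exact ⟨k, (closedBall_subset_ball (by exact_mod_cast hk)).trans hball⟩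
  have hinterior : volume (interior K) = volume K :=
    measure_congr (interior_ae_eq_of_null_frontier (hK.addHaar_frontier volume))
  rw [← tendsto_add_atTop_iff_nat 1, ← hinterior, ← hunion]
  exact tendsto_measure_iUnion_atTop hmono

theorem tendsto_encard_preimage_latticeCorner_mul [Fintype ι] {K : Set (ι → ℝ)}
    (hK : Convex ℝ K) (hKc : IsCompact K) (w : ι → ℝ) :
    Tendsto (fun m : ℕ =>
      (latticeCorner m w ⁻¹' K).encard * ENNReal.ofReal (1 / m) ^ Fintype.card ι)
      atTop (𝓝 (volume K)) :=
  tendsto_of_tendsto_of_tendsto_of_le_of_le' hK.tendsto_volume_setOf_closedBall_subset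
    ((tendsto_measure_cthickening_of_isCompact hKc).comp tendsto_one_div_atTop_nhds_zero_nat)
    (eventually_atTop.2 ⟨1, fun m hm =>
      volume_setOf_closedBall_subset_le (by exact_mod_cast hm) K w⟩)
    (eventually_atTop.2 ⟨1, fun m hm =>
      encard_preimage_latticeCorner_mul_le (by exact_mod_cast hm) K w⟩)

theorem tendsto_ncard_preimage_latticeCorner_div_pow [Fintype ι] {K : Set (ι → ℝ)}
    (hK : Convex ℝ K) (hKc : IsCompact K) (w : ι → ℝ) :
    Tendsto (fun m : ℕ => ((latticeCorner m w ⁻¹' K).ncard : ℝ) / m ^ Fintype.card ι)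
      atTop (𝓝 (volume.real K)) := by
  refine ((ENNReal.tendsto_toReal hKc.measure_lt_top.ne).comp
    (tendsto_encard_preimage_latticeCorner_mul hK hKc w)).congr' ?_
  filter_upwards [eventually_ge_atTop 1] with m hm
  have hm : (0 : ℝ) < m := by exact_mod_cast hm
  rw [Function.comp_apply, ← (hKc.isBounded.finite_preimage_latticeCorner hm w).cast_ncard_eq]
  simp [div_eq_mul_inv]

end LatticeCells

section Gauge

open Set Filter Topology
open scoped Pointwise

/-- Off the cone `ℝ≥0 • K`, `gauge K` takes the junk value `sInf ∅ = 0`. -/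
theorem Convex.mem_smul_of_gauge_le {E : Type*} [NormedAddCommGroup E] [NormedSpace ℝ E]
    {K : Set E} (hK : Convex ℝ K) (hKc : IsClosed K) (h0 : (0 : E) ∈ K) {u : E} {r m : ℝ}
    (hr : 0 < r) (hu : u ∈ r • K) (hm : 0 < m) (hg : gauge K u ≤ m) : u ∈ m • K := by
  have hgt : ∀ s, m < s → s⁻¹ • u ∈ K := by
    intro s hs
    obtain ⟨r', ⟨hr', hu'⟩, hr's⟩ :=
      exists_lt_of_csInf_lt (s := {r | 0 < r ∧ u ∈ r • K}) ⟨r, hr, hu⟩ (hg.trans_lt hs)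
    have hs0 : 0 < s := hm.trans hs
    have := hK.smul_mem_of_zero_mem h0 ((mem_smul_set_iff_inv_smul_mem₀ hr'.ne' _ _).1 hu')
      ⟨by positivity, (div_le_one hs0).2 hr's.le⟩
    rw [smul_smul] at this
    convert this using 2
    field_simp
  rw [mem_smul_set_iff_inv_smul_mem₀ hm.ne']
  exact hKc.mem_of_tendsto (((tendsto_inv₀ hm.ne').smul_const u).mono_left nhdsWithin_le_nhds)
    (eventually_nhdsWithin_of_forall (s := Ioi m) hgt)

theorem mem_smul_iff_mem_coneOf_and_gauge_le {n : ℕ} {K : Set (Fin n → ℝ)} (hK : Convex ℝ K)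
    (hKc : IsClosed K) (h0 : 0 ∈ K) {m : ℝ} (hm : 0 < m) {u : Fin n → ℝ} :
    u ∈ m • K ↔ u ∈ coneOf K ∧ gauge K u ≤ m := by
  constructor
  · rintro ⟨d, hd, rfl⟩
    exact ⟨⟨m, hm.le, d, hd, rfl⟩, gauge_le_of_mem hm.le (smul_mem_smul_set hd)⟩
  · rintro ⟨⟨r, hr, d, hd, rfl⟩, hg⟩
    rcases hr.eq_or_lt with rfl | hr
    · simpa using zero_mem_smul_set (a := m) h0
    · exact hK.mem_smul_of_gauge_le hKc h0 hr (smul_mem_smul_set hd) hm hg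

end Gauge

section Counting

open Finset

theorem Set.ncard_sep_le_eq_sum_ncard_sep_eq {α : Type*} {L : Set α} {g : α → ℝ} {M : ℕ}
    (hM : 0 < M) (hg : ∀ u ∈ L, ∃ k : ℕ, g u = k / M) (m : ℕ)
    (hfin : {u ∈ L | g u ≤ m}.Finite) :
    {u ∈ L | g u ≤ m}.ncard = ∑ k ∈ Finset.range (m * M + 1), {u ∈ L | g u = k / M}.ncard := by
  have hM' : (0 : ℝ) < M := by exact_mod_cast hM
  have hunion : {u ∈ L | g u ≤ m} =
      ⋃ k ∈ (Finset.range (m * M + 1) : Set ℕ), {u ∈ L | g u = k / M} := by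
    ext u
    simp only [Set.mem_ofPred_eq, Set.mem_iUnion, coe_range, Set.mem_Iio, exists_prop]
    constructor
    · rintro ⟨hu, hle⟩
      obtain ⟨k, hk⟩ := hg u hu
      rw [hk, div_le_iff₀ hM'] at hle
      exact ⟨k, Nat.lt_succ_of_le (by exact_mod_cast hle), hu, hk⟩
    · rintro ⟨k, hk, hu, hgu⟩
      refine ⟨hu, hgu ▸ (div_le_iff₀ hM').2 ?_⟩
      exact_mod_cast Nat.le_of_lt_succ hk
  rw [hunion] at hfin ⊢
  rw [(finite_toSet _).ncard_biUnion (fun k hk => hfin.subset (subset_biUnion_of_mem hk)),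
    finsum_mem_coe_finset]
  rintro a - b - hab
  refine Set.disjoint_left.2 fun u ⟨_, ha⟩ ⟨_, hb⟩ => hab ?_
  rw [ha, div_left_inj' hM'.ne'] at hb
  exact_mod_cast hb

theorem setOf_mem_latticePts_gauge_le_eq_image {n : ℕ} {Δ : Set (Fin n → ℝ)}
    (hconv : Convex ℝ Δ) (hclosed : IsClosed Δ) (h0 : 0 ∈ Δ) (N : ℕ) (t : Fin n → ℤ) {m : ℝ}
    (hm : 0 < m) :
    {u | u ∈ latticePts Δ N t ∧ gauge Δ u ≤ m} =
      (fun z j => (t j : ℝ) / N + z j) '' (latticeCorner m (fun j => (t j : ℝ) / N) ⁻¹' Δ) := by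
  have hcorner : ∀ z : Fin n → ℤ, latticeCorner m (fun j => (t j : ℝ) / N) z =
      m⁻¹ • fun j => (t j : ℝ) / N + z j := fun z => by
    ext j
    simp [latticeCorner, div_eq_inv_mul]
  ext u
  simp only [latticePts, Set.mem_ofPred_eq, Set.mem_image, Set.mem_preimage, hcorner,
    ← Set.mem_smul_set_iff_inv_smul_mem₀ hm.ne']
  rw [and_right_comm, ← mem_smul_iff_mem_coneOf_and_gauge_le hconv hclosed h0 hm]
  constructor
  · rintro ⟨hu, z, hz⟩
    obtain rfl : u = fun j => (t j : ℝ) / N + z j := funext hz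
    exact ⟨z, hu, rfl⟩
  · rintro ⟨z, hz, rfl⟩
    exact ⟨hz, z, fun j => rfl⟩

theorem ncard_preimage_latticeCorner_eq_sum_Wcount {n : ℕ} {Δ : Set (Fin n → ℝ)}
    (hconv : Convex ℝ Δ) (hcomp : IsCompact Δ) (h0 : 0 ∈ Δ) {N M : ℕ} (hM : 0 < M) (t : Fin n → ℤ)
    (hMdeg : ∀ u ∈ latticePts Δ N t, ∃ z : ℤ, (M : ℝ) * gauge Δ u = z) {m : ℕ} (hm : 0 < m) :
    (latticeCorner m (fun j => (t j : ℝ) / N) ⁻¹' Δ).ncard =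
      ∑ k ∈ range (m * M + 1), Wcount Δ N M t k := by
  have hm' : (0 : ℝ) < m := by exact_mod_cast hm
  have hinj : Function.Injective fun (z : Fin n → ℤ) j => (t j : ℝ) / N + z j :=
    fun z z' h => funext fun j => by simpa using congrFun h j
  have hdeg : ∀ u ∈ latticePts Δ N t, ∃ k : ℕ, gauge Δ u = k / M := by
    intro u hu
    obtain ⟨z, hz⟩ := hMdeg u hu
    have hz0 : 0 ≤ z := by exact_mod_cast hz ▸ mul_nonneg (Nat.cast_nonneg M) (gauge_nonneg u)
    refine ⟨z.toNat, ?_⟩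
    rw [eq_div_iff (by positivity), mul_comm, hz]
    exact_mod_cast (Int.toNat_of_nonneg hz0).symm
  rw [← Set.ncard_image_of_injective _ hinj,
    ← setOf_mem_latticePts_gauge_le_eq_image hconv hcomp.isClosed h0 N t hm']
  refine Set.ncard_sep_le_eq_sum_ncard_sep_eq hM hdeg m ?_
  rw [setOf_mem_latticePts_gauge_le_eq_image hconv hcomp.isClosed h0 N t hm']
  exact (hcomp.isBounded.finite_preimage_latticeCorner hm' _).image _

end Counting

section Main

open Filter MeasureTheory

theorem P_at_one_equals_normalized_volume_general
    (n : ℕ) (S : Finset (Fin n → ℤ))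
    (Δ : Set (Fin n → ℝ))
    (hΔ : Δ = convexHull ℝ
      (((fun u : Fin n → ℤ => fun j => (u j : ℝ)) '' (S : Set (Fin n → ℤ))) ∪ {0}))
    (N : ℕ) (hN : 1 ≤ N) (t : Fin n → ℤ)
    -- `D` : the least positive integer with `D · deg u ∈ ℤ` for all `u ∈ L_0(Δ)`
    (D : ℕ) (hD : 0 < D)
    -- each `W_t(k)` is finite, and `M · deg u ∈ ℤ` on `L_t(Δ)`
    (hMdeg : ∀ u ∈ latticePts Δ N t,
      ∃ z : ℤ, ((D * N : ℕ) : ℝ) * gauge Δ u = (z : ℝ))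
    -- `P_t` is the polynomial `∑_{k ≤ l} c_k T^k` with non-negative integer coefficients
    (c : ℕ → ℕ) (l : ℕ)
    (hc : ∀ k : ℕ, PowerSeries.coeff (R := ℤ) k
      ((1 - PowerSeries.X ^ (D * N)) ^ n *
        PowerSeries.mk fun j => (Wcount Δ N (D * N) t j : ℤ)) = (c k : ℤ))
    (hcl : ∀ k : ℕ, l < k → c k = 0) :
    ((∑ k ∈ Finset.range (l + 1), c k : ℕ) : ℝ≥0∞)
      = (n.factorial : ℝ≥0∞) * MeasureTheory.volume Δ := by
  have hM : 0 < D * N := Nat.mul_pos hD hN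
  have hgen : (((fun u : Fin n → ℤ => fun j => (u j : ℝ)) '' (S : Set (Fin n → ℤ))) ∪
      {0}).Finite := (S.finite_toSet.image _).union (Set.finite_singleton 0)
  have hconv : Convex ℝ Δ := hΔ ▸ convex_convexHull ℝ _
  have hcomp : IsCompact Δ := hΔ ▸ hgen.isCompact_convexHull (𝕜 := ℝ)
  have h0 : (0 : Fin n → ℝ) ∈ Δ := hΔ ▸ subset_convexHull ℝ _ (Or.inr rfl)
  have hgeo := tendsto_ncard_preimage_latticeCorner_div_pow hconv hcomp fun j => (t j : ℝ) / N
  rw [Fintype.card_fin] at hgeo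
  have hvol : (∑ k ∈ Finset.range (l + 1), (c k : ℝ)) / n.factorial = volume.real Δ := by
    refine tendsto_nhds_unique ((tendsto_sum_range_mul_div_pow hM n _ c l hc hcl).congr' ?_) hgeo
    filter_upwards [eventually_gt_atTop 0] with m hm
    rw [ncard_preimage_latticeCorner_eq_sum_Wcount hconv hcomp h0 hM t hMdeg hm, Nat.cast_sum]
  rw [measureReal_def, div_eq_iff (by positivity)] at hvol
  calc ((∑ k ∈ Finset.range (l + 1), c k : ℕ) : ℝ≥0∞)
      = ENNReal.ofReal (∑ k ∈ Finset.range (l + 1), (c k : ℝ)) := by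
        rw [← Nat.cast_sum, ENNReal.ofReal_natCast]
    _ = (n.factorial : ℝ≥0∞) * volume Δ := by
        rw [hvol, mul_comm, ENNReal.ofReal_mul (by positivity), ENNReal.ofReal_natCast,
          ENNReal.ofReal_toReal hcomp.measure_lt_top.ne]

/-- The value at `T = 1` of the polynomial
`P_t(T) = (1 - T^M)^n ∑_{k ≥ 0} W_t(k) T^k` equals `n!` times the Lebesgue volume of `Δ`:
`P_t(1) = n!·vol(Δ)`. -/
theorem P_at_one_equals_normalized_volume
    (n : ℕ) (hn : 1 ≤ n) (S : Finset (Fin n → ℤ))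
    (Δ : Set (Fin n → ℝ))
    (hΔ : Δ = convexHull ℝ
      (((fun u : Fin n → ℤ => fun j => (u j : ℝ)) '' (S : Set (Fin n → ℤ))) ∪ {0}))
    (hspan : Submodule.span ℝ Δ = ⊤)
    (N : ℕ) (hN : 1 ≤ N) (t : Fin n → ℤ)
    -- `D` : the least positive integer with `D · deg u ∈ ℤ` for all `u ∈ L_0(Δ)`
    (D : ℕ) (hD : 0 < D)
    (hDint : ∀ u ∈ latticePts Δ N (fun _ => (0 : ℤ)),
      ∃ z : ℤ, (D : ℝ) * gauge Δ u = (z : ℝ))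
    (hDmin : ∀ D' : ℕ, 0 < D' →
      (∀ u ∈ latticePts Δ N (fun _ => (0 : ℤ)),
        ∃ z : ℤ, (D' : ℝ) * gauge Δ u = (z : ℝ)) → D ≤ D')
    -- each `W_t(k)` is finite, and `M · deg u ∈ ℤ` on `L_t(Δ)`
    (hfin : ∀ k : ℕ,
      {u | u ∈ latticePts Δ N t ∧ gauge Δ u = (k : ℝ) / ((D * N : ℕ) : ℝ)}.Finite)
    (hMdeg : ∀ u ∈ latticePts Δ N t,
      ∃ z : ℤ, ((D * N : ℕ) : ℝ) * gauge Δ u = (z : ℝ))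
    -- `P_t` is the polynomial `∑_{k ≤ l} c_k T^k` with non-negative integer coefficients
    (c : ℕ → ℕ) (l : ℕ)
    (hc : ∀ k : ℕ, PowerSeries.coeff (R := ℤ) k
      ((1 - PowerSeries.X ^ (D * N)) ^ n *
        PowerSeries.mk fun j => (Wcount Δ N (D * N) t j : ℤ)) = (c k : ℤ))
    (hcl : ∀ k : ℕ, l < k → c k = 0) :
    ((∑ k ∈ Finset.range (l + 1), c k : ℕ) : ℝ≥0∞)
      = (n.factorial : ℝ≥0∞) * MeasureTheory.volume Δ :=
  P_at_one_equals_normalized_volume_general n S Δ hΔ N hN t D hD hMdeg c l hc hcl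

end Main
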